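/- arXiv:2510.17267 — 2 statements merged into one kernel-verified Lean document; each statement's English description precedes it below -/
import Mathlib

section
/- Let $j \geq 1$ be an integer and let $(c_h)_{h \geq 0}$ be a sequence of nonnegative real numbers such that the Cesàro limit $L = \lim_{M \to \infty} \frac{1}{M}\sum_{h=0}^{M-1} c_h$ exists. Then $\limsup_{N\to\infty} \frac{1}{N^2} \sum_{m=0}^{N-1} \sum_{n=0}^{N-1} c_{m + jn} \leq L$. -/
/-!
Write `S M = ∑_{h<M} c h` and `e M = S M - L M`, so that the Cesàro hypothesis says `e M = o(M)`.
Row `n` of the square sums to `S (jn + N) - S (jn) = L N + e (jn + N) - e (jn)`, and both error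
terms are `o(N)` uniformly in `n < N` because `jn + N ≤ (j + 1) N`. Summing the `N` rows, the
square sum is `L N² + o(N²)`, so the two-dimensional averages even converge to `L`.
-/

open Finset Filter Asymptotics Topology

lemma isLittleO_sub_mul_pow_iff_tendsto_div (f : ℕ → ℝ) (L : ℝ) (k : ℕ) :
    (fun M : ℕ => f M - L * (M : ℝ) ^ k) =o[atTop] (fun M : ℕ => (M : ℝ) ^ k) ↔
      Tendsto (fun M : ℕ => f M / (M : ℝ) ^ k) atTop (𝓝 L) := by
  have hM : ∀ᶠ M : ℕ in atTop, (M : ℝ) ^ k ≠ 0 := by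
    filter_upwards [eventually_ne_atTop 0] with M hM using pow_ne_zero k (Nat.cast_ne_zero.mpr hM)
  rw [isLittleO_iff_tendsto' (hM.mono fun M hM h => absurd h hM)]
  refine (tendsto_congr' ?_).trans tendsto_sub_nhds_zero_iff
  filter_upwards [hM] with M hM
  field_simp

lemma exists_abs_le_mul_add_of_isLittleO {e : ℕ → ℝ} (he : e =o[atTop] (fun M : ℕ => (M : ℝ)))
    {δ : ℝ} (hδ : 0 < δ) : ∃ C, ∀ M : ℕ, |e M| ≤ δ * M + C := by
  obtain ⟨M₀, hM₀⟩ := eventually_atTop.mp (he.bound hδ)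
  have hC : 0 ≤ ∑ k ∈ range M₀, |e k| := sum_nonneg fun k _ => abs_nonneg _
  refine ⟨∑ k ∈ range M₀, |e k|, fun M => ?_⟩
  rcases lt_or_ge M M₀ with hM | hM
  · have := single_le_sum (f := fun k => |e k|) (fun k _ => abs_nonneg _) (mem_range.mpr hM)
    have : 0 ≤ δ * M := by positivity
    linarith
  · have := hM₀ M hM
    simp only [Real.norm_eq_abs, Nat.abs_cast] at this
    linarith

lemma isLittleO_sum_sub_of_isLittleO {e : ℕ → ℝ} (he : e =o[atTop] (fun M : ℕ => (M : ℝ)))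
    (j : ℕ) :
    (fun N : ℕ => ∑ n ∈ range N, (e (j * n + N) - e (j * n))) =o[atTop]
      (fun N : ℕ => (N : ℝ) ^ 2) := by
  refine isLittleO_iff.mpr fun ε hε => ?_
  set δ := ε / (2 * (2 * j + 1))
  obtain ⟨C, hC⟩ := exists_abs_le_mul_add_of_isLittleO he (δ := δ) (by positivity)
  have hrow : ∀ N, ∀ n ∈ range N, |e (j * n + N) - e (j * n)| ≤ δ * (2 * j + 1) * N + 2 * C := by
    intro N n hn
    have hnN : (n : ℝ) ≤ N := by exact_mod_cast (mem_range.mp hn).le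
    have h₁ := hC (j * n + N)
    have h₂ := hC (j * n)
    push_cast at h₁ h₂
    calc |e (j * n + N) - e (j * n)| ≤ |e (j * n + N)| + |e (j * n)| := abs_sub _ _
      _ ≤ δ * (2 * j * n + N) + 2 * C := by linarith
      _ ≤ δ * (2 * j * N + N) + 2 * C := by gcongr
      _ = δ * (2 * j + 1) * N + 2 * C := by ring
  filter_upwards [eventually_ge_atTop ⌈4 * C / ε⌉₊] with N hN
  have hCN : 4 * C / ε ≤ N := Nat.ceil_le.mp hN
  have hCN' : 2 * C * N ≤ ε / 2 * N ^ 2 := by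
    rw [div_le_iff₀ hε] at hCN
    nlinarith [(N.cast_nonneg : (0 : ℝ) ≤ N)]
  have hδ : δ * (2 * j + 1) = ε / 2 := by
    simp only [δ]
    field_simp
  simp only [Real.norm_eq_abs, abs_pow, Nat.abs_cast]
  calc |∑ n ∈ range N, (e (j * n + N) - e (j * n))|
      ≤ ∑ n ∈ range N, |e (j * n + N) - e (j * n)| := abs_sum_le_sum_abs _ _
    _ ≤ ∑ _n ∈ range N, (δ * (2 * j + 1) * N + 2 * C) := sum_le_sum (hrow N)
    _ = ε / 2 * N ^ 2 + 2 * C * N := by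
      rw [sum_const, card_range, nsmul_eq_mul, hδ]
      ring
    _ ≤ ε * N ^ 2 := by linarith

lemma sum_range_sum_range_sub_mul_sq (c : ℕ → ℝ) (L : ℝ) (j N : ℕ) :
    ∑ m ∈ range N, ∑ n ∈ range N, c (m + j * n) - L * (N : ℝ) ^ 2 =
      ∑ n ∈ range N, ((∑ h ∈ range (j * n + N), c h - L * ↑(j * n + N)) -
        (∑ h ∈ range (j * n), c h - L * ↑(j * n))) := by
  have hrow : ∀ n, ∑ h ∈ range (j * n + N), c h - ∑ h ∈ range (j * n), c h =
      ∑ m ∈ range N, c (m + j * n) := by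
    intro n
    rw [sum_range_add_sub_sum_range]
    simp only [add_comm]
  simp only [Nat.cast_add, sub_sub_sub_comm, add_sub_cancel_left, hrow, mul_add]
  rw [sum_comm, sum_sub_distrib, sum_const, card_range, nsmul_eq_mul]
  ring

theorem limsup_two_dim_avg_le_cesaro_general (j : ℕ) (c : ℕ → ℝ) (L : ℝ)
    (hL : Tendsto (fun M : ℕ => (1 / (M : ℝ)) * ∑ h ∈ Finset.range M, c h) atTop (nhds L)) :
    Filter.limsup
      (fun N : ℕ => (1 / (N : ℝ) ^ 2) *
        ∑ m ∈ Finset.range N, ∑ n ∈ Finset.range N, c (m + j * n)) atTop ≤ L := by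
  have hS : (fun M : ℕ => ∑ h ∈ range M, c h - L * (M : ℝ) ^ 1) =o[atTop]
      (fun M : ℕ => (M : ℝ) ^ 1) := by
    rw [isLittleO_sub_mul_pow_iff_tendsto_div]
    simpa only [pow_one, one_div_mul_eq_div] using hL
  have hsquare : (fun N : ℕ => ∑ m ∈ range N, ∑ n ∈ range N, c (m + j * n) - L * (N : ℝ) ^ 2)
      =o[atTop] (fun N : ℕ => (N : ℝ) ^ 2) := by
    simp only [pow_one] at hS
    simpa only [sum_range_sum_range_sub_mul_sq] using isLittleO_sum_sub_of_isLittleO hS j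
  rw [isLittleO_sub_mul_pow_iff_tendsto_div] at hsquare
  simp only [one_div_mul_eq_div]
  exact hsquare.limsup_eq.le

/-- The two-dimensional average of `c (m + j n)` over the square `[0,N-1]²` is
controlled by the one-dimensional Cesàro average of `c`. -/
theorem limsup_two_dim_avg_le_cesaro (j : ℕ) (hj : 1 ≤ j) (c : ℕ → ℝ)
    (hc : ∀ h, 0 ≤ c h) (L : ℝ)
    (hL : Tendsto (fun M : ℕ => (1 / (M : ℝ)) * ∑ h ∈ Finset.range M, c h) atTop (nhds L)) :
    Filter.limsup
      (fun N : ℕ => (1 / (N : ℝ) ^ 2) *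
        ∑ m ∈ Finset.range N, ∑ n ∈ Finset.range N, c (m + j * n)) atTop ≤ L :=
  limsup_two_dim_avg_le_cesaro_general j c L hL
end

section
/- Let $V$ be a complex inner product space (or $L^2$ of a probability space), let $k \geq 2$, and for $v \in \{0,1\}^k \setminus \{0\}$ let $a^{(v)} : \mathbb{Z}^2 \to [-1,1]$ be real sequences bounded by 1. Then $\left| \frac{1}{N^{2k}} \sum_{l, h \in [0,N-1]^k} \prod_{v \in \{0,1\}^k\setminus\{0\}} a^{(v)}_{l \cdot v,\, h \cdot v} \right|^2 \leq \frac{4}{N^{2k-4}} \sum_{h_1,\dots,h_{k-2},\, l_1,\dots,l_{k-2}=0}^{N-1} \sup_{t,s \in \mathbb{R}} \left| \frac{1}{N^2}\sum_{l_k, h_k = 0}^{N-1} e^{2\pi i (l_k t + h_k s)} \prod_{\substack{v : v_{k-1}=0,\, v_k = 1}} a^{(v)}_{l_k + \sum_{i=1}^{k-2} v_i l_i,\; h_k + \sum_{i=1}^{k-2} v_i h_i} \right|^2 -/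
/-
Split `l = (l', x, y)` and `h = (h', z, w)` along the last two coordinates. The product over
`v ≠ 0` factors as `A(x, z) · F(y, w) · G(x + y, z + w)`, where `F` collects the `v` ending in
`(0, 1)` and `G` those ending in `(1, 1)`; all factors are bounded by `1`. Cauchy–Schwarz over
`(l', h', x, z)` reduces the estimate to the correlation bound
`∑_{x,z} |∑_{y,w} F(y,w) G(x+y,z+w)|² ≤ sup |F̂|² · ∑ |G|² ≤ 4N² sup |F̂|²`,
which is Plancherel on `(ℤ/2N)²`, where the correlation has Fourier transform `F̂ · Ĝ`.
-/

open Finset Complex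
open scoped ComplexConjugate Real

namespace AddChar

variable {α : Type*} [AddCommGroup α] [Fintype α]

theorem sum_norm_sq_sum_mul_conj (f : α → ℂ) :
    ∑ ψ : AddChar α ℂ, ‖∑ x, f x * conj (ψ x)‖ ^ 2 =
      Fintype.card α * ∑ x, ‖f x‖ ^ 2 := by
  classical
  have expand (ψ : AddChar α ℂ) : (‖∑ x, f x * conj (ψ x)‖ : ℂ) ^ 2 =
      ∑ x, ∑ y, f x * conj (f y) * ψ (y - x) := by
    rw [← mul_conj', map_sum, sum_mul_sum]
    refine sum_congr rfl fun x _ => sum_congr rfl fun y _ => ?_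
    rw [sub_eq_add_neg, map_add_eq_mul, map_neg_eq_conj, map_mul, conj_conj]
    ring
  apply ofReal_injective
  push_cast
  simp_rw [expand]
  rw [sum_comm, mul_sum]
  refine sum_congr rfl fun x _ => ?_
  rw [sum_comm]
  simp_rw [← mul_sum, sum_apply_eq_ite, sub_eq_zero, mul_ite, mul_zero, sum_ite_eq',
    if_pos (mem_univ x), mul_conj']
  ring

theorem sum_correlation_mul_conj (F G : α → ℂ) (ψ : AddChar α ℂ) :
    ∑ x, (∑ y, F y * G (x + y)) * conj (ψ x) =
      (∑ y, F y * ψ y) * ∑ u, G u * conj (ψ u) := by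
  simp_rw [sum_mul]
  rw [sum_comm]
  refine sum_congr rfl fun y _ => ?_
  rw [← Equiv.sum_comp (Equiv.addRight y) (fun u => G u * conj (ψ u)), mul_sum]
  refine sum_congr rfl fun x _ => ?_
  rw [Equiv.coe_addRight, ← map_neg_eq_conj, ← map_neg_eq_conj,
    show -x = -(x + y) + y by abel, map_add_eq_mul]
  ring

theorem sum_norm_sq_correlation_le (F G : α → ℂ) {B : ℝ}
    (hB : ∀ ψ : AddChar α ℂ, ‖∑ y, F y * ψ y‖ ^ 2 ≤ B) :
    ∑ x, ‖∑ y, F y * G (x + y)‖ ^ 2 ≤ B * ∑ x, ‖G x‖ ^ 2 := by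
  have hcard : (0 : ℝ) < Fintype.card α := by exact_mod_cast Fintype.card_pos
  refine le_of_mul_le_mul_left ?_ hcard
  calc (Fintype.card α : ℝ) * ∑ x, ‖∑ y, F y * G (x + y)‖ ^ 2
      = ∑ ψ : AddChar α ℂ,
          ‖∑ y, F y * ψ y‖ ^ 2 * ‖∑ u, G u * conj (ψ u)‖ ^ 2 := by
        simp_rw [← sum_norm_sq_sum_mul_conj, sum_correlation_mul_conj, norm_mul, mul_pow]
    _ ≤ ∑ ψ : AddChar α ℂ, B * ‖∑ u, G u * conj (ψ u)‖ ^ 2 :=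
        sum_le_sum fun ψ _ => mul_le_mul_of_nonneg_right (hB ψ) (by positivity)
    _ = Fintype.card α * (B * ∑ x, ‖G x‖ ^ 2) := by
        rw [← mul_sum, sum_norm_sq_sum_mul_conj]
        ring

theorem exists_apply_nsmul_eq_exp {A : Type*} [AddCommGroup A] [Finite A] (ψ : AddChar A ℂ)
    (a : A) : ∃ t : ℝ, ∀ n : ℕ, ψ (n • a) = exp (2 * π * I * (n * t)) := by
  set θ := arg (ψ a)
  have hψa : ψ a = exp (θ * I) := by
    simpa using (norm_mul_exp_arg_mul_I (ψ a)).symm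
  refine ⟨θ / (2 * π), fun n => ?_⟩
  rw [map_nsmul_eq_pow, hψa, ← exp_nat_mul]
  congr 1
  push_cast
  field_simp [Real.pi_ne_zero]

end AddChar

theorem sum_range_sum_range_ite_lt {R : Type*} [AddCommMonoid R] {N M : ℕ} (hNM : N ≤ M)
    (f : ℕ → ℕ → R) :
    ∑ u ∈ range M, ∑ w ∈ range M, (if u < N ∧ w < N then f u w else 0) =
      ∑ u ∈ range N, ∑ w ∈ range N, f u w := by
  rw [← sum_product', ← sum_product',
    ← sum_filter (fun p : ℕ × ℕ => p.1 < N ∧ p.2 < N)]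
  congr 1
  ext ⟨u, w⟩
  simp only [mem_filter, mem_product, mem_range]
  omega

noncomputable def expSum (N : ℕ) (F : ℕ → ℕ → ℝ) (t s : ℝ) : ℂ :=
  ∑ b ∈ range N, ∑ d ∈ range N, exp (2 * π * I * (b * t + d * s)) * F b d

section

open Fin.NatCast

theorem sum_fin_prod_fin_eq_sum_range {R : Type*} [AddCommMonoid R] (M : ℕ) [NeZero M]
    (f : Fin M × Fin M → R) :
    ∑ p, f p = ∑ u ∈ range M, ∑ w ∈ range M, f ((u : Fin M), (w : Fin M)) := by
  rw [Fintype.sum_prod_type, ← Fin.sum_univ_eq_sum_range]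
  refine Fintype.sum_congr _ _ fun u => ?_
  rw [← Fin.sum_univ_eq_sum_range]
  simp only [Fin.cast_val_eq_self]

theorem sum_sq_correlation_le (N : ℕ) (F G : ℕ → ℕ → ℝ) {B : ℝ}
    (hB : ∀ t s, ‖expSum N F t s‖ ^ 2 ≤ B) :
    ∑ x ∈ range N, ∑ z ∈ range N,
        (∑ y ∈ range N, ∑ w ∈ range N, F y w * G (x + y) (z + w)) ^ 2
      ≤ B * ∑ u ∈ range (2 * N), ∑ w ∈ range (2 * N), G u w ^ 2 := by
  rcases N.eq_zero_or_pos with rfl | hN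
  · simp
  set M := 2 * N
  have : NeZero M := ⟨by omega⟩
  -- in `Fin (2N) × Fin (2N)` the sums `x + y`, `z + w` of indices below `N` do not wrap around
  let F' : Fin M × Fin M → ℂ := fun p =>
    if (p.1 : ℕ) < N ∧ (p.2 : ℕ) < N then F p.1 p.2 else 0
  let G' : Fin M × Fin M → ℂ := fun p => G p.1 p.2
  have hF' (u w : ℕ) (hu : u ∈ range M) (hw : w ∈ range M) :
      F' ((u : Fin M), (w : Fin M)) = if u < N ∧ w < N then (F u w : ℂ) else 0 := by
    simp only [F', Fin.val_natCast, Nat.mod_eq_of_lt (mem_range.1 hu),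
      Nat.mod_eq_of_lt (mem_range.1 hw)]
  have hFourier (ψ : AddChar (Fin M × Fin M) ℂ) : ‖∑ q, F' q * ψ q‖ ^ 2 ≤ B := by
    obtain ⟨t, ht⟩ := ψ.exists_apply_nsmul_eq_exp (1, 0)
    obtain ⟨s, hs⟩ := ψ.exists_apply_nsmul_eq_exp (0, 1)
    have hψ (u w : ℕ) :
        ψ ((u : Fin M), (w : Fin M)) = exp (2 * π * I * (u * t + w * s)) := by
      have : ((u : Fin M), (w : Fin M)) = u • (1, 0) + w • (0, 1) := by ext <;> simp
      rw [this, AddChar.map_add_eq_mul, ht, hs, ← exp_add]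
      ring_nf
    convert hB t s using 3
    rw [sum_fin_prod_fin_eq_sum_range, expSum, ← sum_range_sum_range_ite_lt (by omega : N ≤ M)
      fun u w => exp (2 * π * I * (u * t + w * s)) * F u w]
    refine sum_congr rfl fun u hu => sum_congr rfl fun w hw => ?_
    rw [hF' u w hu hw, hψ, ite_mul, zero_mul, mul_comm]
  have hC (x z : ℕ) (hx : x < N) (hz : z < N) :
      ∑ q, F' q * G' (((x : Fin M), (z : Fin M)) + q) =
        ∑ y ∈ range N, ∑ w ∈ range N, (F y w : ℂ) * G (x + y) (z + w) := by
    rw [sum_fin_prod_fin_eq_sum_range, ← sum_range_sum_range_ite_lt (by omega : N ≤ M)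
      fun y w => (F y w : ℂ) * G (x + y) (z + w)]
    refine sum_congr rfl fun y hy => sum_congr rfl fun w hw => ?_
    rw [hF' y w hy hw, ite_mul, zero_mul]
    split_ifs with hyw
    · simp only [G', Prod.mk_add_mk, ← Nat.cast_add, Fin.val_natCast,
        Nat.mod_eq_of_lt (show x + y < M by omega), Nat.mod_eq_of_lt (show z + w < M by omega)]
    · rfl
  calc ∑ x ∈ range N, ∑ z ∈ range N,
        (∑ y ∈ range N, ∑ w ∈ range N, F y w * G (x + y) (z + w)) ^ 2
      = ∑ x ∈ range N, ∑ z ∈ range N,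
          ‖∑ q, F' q * G' (((x : Fin M), (z : Fin M)) + q)‖ ^ 2 := by
        refine sum_congr rfl fun x hx => sum_congr rfl fun z hz => ?_
        rw [hC x z (mem_range.1 hx) (mem_range.1 hz)]
        norm_cast
        rw [Real.norm_eq_abs, sq_abs]
    _ ≤ ∑ x ∈ range M, ∑ z ∈ range M,
          ‖∑ q, F' q * G' (((x : Fin M), (z : Fin M)) + q)‖ ^ 2 := by
        have hsub : range N ⊆ range M := range_subset_range.2 (by omega)
        exact (sum_le_sum fun x _ =>
            sum_le_sum_of_subset_of_nonneg hsub fun _ _ _ => by positivity)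
          |>.trans (sum_le_sum_of_subset_of_nonneg hsub fun _ _ _ => by positivity)
    _ = ∑ p, ‖∑ q, F' q * G' (p + q)‖ ^ 2 := by
        rw [sum_fin_prod_fin_eq_sum_range]
    _ ≤ B * ∑ p, ‖G' p‖ ^ 2 := AddChar.sum_norm_sq_correlation_le F' G' hFourier
    _ = B * ∑ u ∈ range M, ∑ w ∈ range M, G u w ^ 2 := by
        rw [sum_fin_prod_fin_eq_sum_range]
        refine congrArg (B * ·) (sum_congr rfl fun u hu => sum_congr rfl fun w hw => ?_)
        simp only [G', Fin.val_natCast, Nat.mod_eq_of_lt (mem_range.1 hu),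
          Nat.mod_eq_of_lt (mem_range.1 hw), norm_real, Real.norm_eq_abs, sq_abs]

end

noncomputable def supExpSumSq (N : ℕ) (F : ℕ → ℕ → ℝ) : ℝ :=
  ⨆ t : ℝ, ⨆ s : ℝ, ‖(1 / (N : ℂ) ^ 2) * expSum N F t s‖ ^ 2

theorem norm_expSum_le (N : ℕ) (F : ℕ → ℕ → ℝ) (t s : ℝ) :
    ‖expSum N F t s‖ ≤ ∑ b ∈ range N, ∑ d ∈ range N, |F b d| := by
  refine (norm_sum_le _ _).trans
    (sum_le_sum fun b _ => (norm_sum_le _ _).trans (sum_le_sum fun d _ => ?_))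
  simp [norm_exp]

theorem supExpSumSq_nonneg (N : ℕ) (F : ℕ → ℕ → ℝ) : 0 ≤ supExpSumSq N F :=
  Real.iSup_nonneg fun _ => Real.iSup_nonneg fun _ => sq_nonneg _

theorem norm_sq_expSum_le_supExpSumSq (N : ℕ) (F : ℕ → ℕ → ℝ) (t s : ℝ) :
    ‖expSum N F t s‖ ^ 2 ≤ (N : ℝ) ^ 4 * supExpSumSq N F := by
  rcases N.eq_zero_or_pos with rfl | hN
  · simp [expSum]
  have hbdd : BddAbove
      (⋃ t : ℝ, Set.range fun s : ℝ => ‖(1 / (N : ℂ) ^ 2) * expSum N F t s‖ ^ 2) := by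
    refine ⟨(‖(1 / (N : ℂ) ^ 2)‖ * ∑ b ∈ range N, ∑ d ∈ range N, |F b d|) ^ 2, ?_⟩
    rintro _ ⟨_, ⟨t, rfl⟩, ⟨s, rfl⟩⟩
    dsimp only
    rw [norm_mul]
    gcongr
    exact norm_expSum_le N F t s
  have hN' : (N : ℂ) ≠ 0 := by exact_mod_cast hN.ne'
  calc ‖expSum N F t s‖ ^ 2
      = (N : ℝ) ^ 4 * ‖(1 / (N : ℂ) ^ 2) * expSum N F t s‖ ^ 2 := by
        rw [norm_mul, mul_pow, norm_div, norm_one, norm_pow, Complex.norm_natCast]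
        field_simp
    _ ≤ (N : ℝ) ^ 4 * supExpSumSq N F := by
        gcongr
        exact le_ciSup₂ (f := fun t s => ‖(1 / (N : ℂ) ^ 2) * expSum N F t s‖ ^ 2) hbdd t s

theorem sq_sum_sum_le_card_mul_card_mul_sum_sum_sq {ι κ : Type*} (s : Finset ι) (t : Finset κ)
    (f : ι → κ → ℝ) :
    (∑ i ∈ s, ∑ j ∈ t, f i j) ^ 2 ≤ #s * #t * ∑ i ∈ s, ∑ j ∈ t, f i j ^ 2 := by
  rw [← sum_product', ← sum_product' (f := fun i j => f i j ^ 2), ← Nat.cast_mul,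
    ← card_product]
  exact sq_sum_le_card_mul_sum_sq

theorem sq_sum_mul_correlation_le (N : ℕ) (A F G : ℕ → ℕ → ℝ)
    (hA : ∀ x z, |A x z| ≤ 1) (hG : ∀ u w, |G u w| ≤ 1) :
    (∑ x ∈ range N, ∑ z ∈ range N,
        A x z * ∑ y ∈ range N, ∑ w ∈ range N, F y w * G (x + y) (z + w)) ^ 2
      ≤ 4 * N ^ 8 * supExpSumSq N F := by
  set T := fun x z => ∑ y ∈ range N, ∑ w ∈ range N, F y w * G (x + y) (z + w)
  have hsup := supExpSumSq_nonneg N F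
  calc (∑ x ∈ range N, ∑ z ∈ range N, A x z * T x z) ^ 2
      ≤ N * N * ∑ x ∈ range N, ∑ z ∈ range N, (A x z * T x z) ^ 2 := by
        simpa using sq_sum_sum_le_card_mul_card_mul_sum_sum_sq (range N) (range N) _
    _ ≤ N * N * ∑ x ∈ range N, ∑ z ∈ range N, T x z ^ 2 := by
        gcongr N * N * ?_
        refine sum_le_sum fun x _ => sum_le_sum fun z _ => ?_
        rw [mul_pow, ← sq_abs (A x z)]
        exact mul_le_of_le_one_left (sq_nonneg _) (pow_le_one₀ (abs_nonneg _) (hA x z))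
    _ ≤ N * N * (N ^ 4 * supExpSumSq N F *
          ∑ u ∈ range (2 * N), ∑ w ∈ range (2 * N), G u w ^ 2) := by
        gcongr
        exact sum_sq_correlation_le N F G (norm_sq_expSum_le_supExpSumSq N F)
    _ ≤ N * N * (N ^ 4 * supExpSumSq N F *
          ∑ u ∈ range (2 * N), ∑ w ∈ range (2 * N), 1) := by
        gcongr with u _ w _
        rw [← sq_abs]
        exact pow_le_one₀ (abs_nonneg _) (hG u w)
    _ = 4 * N ^ 8 * supExpSumSq N F := by
        simp only [sum_const, card_range, nsmul_eq_mul, mul_one]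
        push_cast
        ring

theorem abs_prod_le_one {ι R : Type*} [CommRing R] [LinearOrder R] [IsStrictOrderedRing R]
    {s : Finset ι} {f : ι → R} (hf : ∀ i ∈ s, |f i| ≤ 1) : |∏ i ∈ s, f i| ≤ 1 := by
  rw [abs_prod]
  exact prod_le_one (fun _ _ => abs_nonneg _) hf

theorem sum_piFinset_snoc {β M : Type*} [AddCommMonoid M] {n : ℕ} (s : Finset β)
    (f : (Fin (n + 1) → β) → M) :
    ∑ l ∈ Fintype.piFinset (fun _ => s), f l =
      ∑ l ∈ Fintype.piFinset (fun _ : Fin n => s), ∑ x ∈ s, f (Fin.snoc l x) := by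
  rw [← sum_product']
  refine sum_nbij' (fun l => (Fin.init l, l (Fin.last n))) (fun p => Fin.snoc p.1 p.2)
    ?_ ?_ ?_ ?_ ?_ <;> simp +contextual [Fin.forall_fin_succ', Fin.init]

def boolDot {n : ℕ} (v : Fin n → Bool) (l : Fin n → ℕ) : ℕ :=
  ∑ i, if v i then l i else 0

theorem boolDot_snoc {n : ℕ} (v : Fin (n + 1) → Bool) (l : Fin n → ℕ) (x : ℕ) :
    boolDot v (Fin.snoc l x) = boolDot (Fin.init v) l + if v (Fin.last n) then x else 0 := by
  simp only [boolDot, Fin.sum_univ_castSucc, Fin.snoc_castSucc, Fin.snoc_last]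
  rfl

section Cube

variable {m : ℕ} (a : (Fin (m + 2) → Bool) → ℕ → ℕ → ℝ) (l h : Fin m → ℕ)

def prodLastFalse (x z : ℕ) : ℝ :=
  ∏ v ∈ univ.filter fun v : Fin (m + 2) → Bool =>
      (v ≠ fun _ => false) ∧ v (Fin.last (m + 1)) = false,
    a v ((if v (Fin.last m).castSucc then x else 0) + boolDot (Fin.init (Fin.init v)) l)
      ((if v (Fin.last m).castSucc then z else 0) + boolDot (Fin.init (Fin.init v)) h)

def prodLastTrueSecondFalse (y w : ℕ) : ℝ :=
  ∏ v ∈ univ.filter fun v : Fin (m + 2) → Bool =>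
      v (Fin.last m).castSucc = false ∧ v (Fin.last (m + 1)) = true,
    a v (y + boolDot (Fin.init (Fin.init v)) l) (w + boolDot (Fin.init (Fin.init v)) h)

def prodLastTwoTrue (u w : ℕ) : ℝ :=
  ∏ v ∈ univ.filter fun v : Fin (m + 2) → Bool =>
      v (Fin.last m).castSucc = true ∧ v (Fin.last (m + 1)) = true,
    a v (u + boolDot (Fin.init (Fin.init v)) l) (w + boolDot (Fin.init (Fin.init v)) h)

theorem prod_boolDot_snoc_snoc (x y z w : ℕ) :
    ∏ v ∈ univ.filter (fun v : Fin (m + 2) → Bool => v ≠ fun _ => false),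
        a v (boolDot v (Fin.snoc (Fin.snoc l x) y)) (boolDot v (Fin.snoc (Fin.snoc h z) w)) =
      prodLastFalse a l h x z *
        (prodLastTrueSecondFalse a l h y w * prodLastTwoTrue a l h (x + y) (z + w)) := by
  simp only [prodLastFalse, prodLastTrueSecondFalse, prodLastTwoTrue, prod_filter,
    ← prod_mul_distrib]
  refine prod_congr rfl fun v _ => ?_
  simp only [boolDot_snoc, Fin.init]
  by_cases hq : v (Fin.last (m + 1)) = true
  · have hv : v ≠ fun _ => false := fun h0 => by simp [h0] at hq
    by_cases hp : v (Fin.last m).castSucc = true <;>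
      simp [hp, hq, hv, add_comm, add_left_comm, add_assoc]
  · simp [hq, add_comm]
    -- the two sides differ only in their `Decidable` instances
    congr

theorem sum_cube_prod_eq (N : ℕ) :
    ∑ l ∈ Fintype.piFinset (fun _ : Fin (m + 2) => range N),
      ∑ h ∈ Fintype.piFinset (fun _ : Fin (m + 2) => range N),
        ∏ v ∈ univ.filter (fun v : Fin (m + 2) → Bool => v ≠ fun _ => false),
          a v (boolDot v l) (boolDot v h) =
      ∑ l ∈ Fintype.piFinset (fun _ : Fin m => range N),
        ∑ h ∈ Fintype.piFinset (fun _ : Fin m => range N),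
          ∑ x ∈ range N, ∑ z ∈ range N, prodLastFalse a l h x z *
            ∑ y ∈ range N, ∑ w ∈ range N,
              prodLastTrueSecondFalse a l h y w * prodLastTwoTrue a l h (x + y) (z + w) := by
  simp only [sum_piFinset_snoc (n := m + 1), sum_piFinset_snoc (n := m),
    prod_boolDot_snoc_snoc, mul_sum]
  refine sum_congr rfl fun l _ => ?_
  refine (sum_congr rfl fun x _ => sum_comm).trans (sum_comm.trans ?_)
  exact sum_congr rfl fun h _ => sum_congr rfl fun x _ => sum_comm

end Cube

theorem sq_cubic_average_le (m N : ℕ) (hN : 1 ≤ N)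
    (a : (Fin (m + 2) → Bool) → ℕ → ℕ → ℝ) (ha : ∀ v m n, |a v m n| ≤ 1) :
    |(1 / (N : ℝ) ^ (2 * (m + 2))) *
        ∑ l ∈ Fintype.piFinset (fun _ : Fin (m + 2) => range N),
          ∑ h ∈ Fintype.piFinset (fun _ : Fin (m + 2) => range N),
            ∏ v ∈ univ.filter (fun v : Fin (m + 2) → Bool => v ≠ fun _ => false),
              a v (boolDot v l) (boolDot v h)| ^ 2 ≤
      4 / (N : ℝ) ^ (2 * m) *
        ∑ l ∈ Fintype.piFinset (fun _ : Fin m => range N),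
          ∑ h ∈ Fintype.piFinset (fun _ : Fin m => range N),
            supExpSumSq N (prodLastTrueSecondFalse a l h) := by
  set Λ := Fintype.piFinset (fun _ : Fin m => range N)
  have hΛ : (#Λ : ℝ) = N ^ m := by simp [Λ]
  have hN' : (N : ℝ) ≠ 0 := by positivity
  calc _ = (1 / (N : ℝ) ^ (2 * (m + 2))) ^ 2 * (∑ l ∈ Λ, ∑ h ∈ Λ,
          ∑ x ∈ range N, ∑ z ∈ range N, prodLastFalse a l h x z *
            ∑ y ∈ range N, ∑ w ∈ range N,
              prodLastTrueSecondFalse a l h y w * prodLastTwoTrue a l h (x + y) (z + w)) ^ 2 := by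
        rw [sum_cube_prod_eq, sq_abs, mul_pow]
    _ ≤ (1 / (N : ℝ) ^ (2 * (m + 2))) ^ 2 * (#Λ * #Λ * ∑ l ∈ Λ, ∑ h ∈ Λ,
          4 * N ^ 8 * supExpSumSq N (prodLastTrueSecondFalse a l h)) := by
        gcongr
        refine (sq_sum_sum_le_card_mul_card_mul_sum_sum_sq Λ Λ _).trans ?_
        gcongr with l _ h _
        exact sq_sum_mul_correlation_le N _ _ _ (fun x z => abs_prod_le_one fun v _ => ha _ _ _)
          (fun u w => abs_prod_le_one fun v _ => ha _ _ _)
    _ = _ := by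
        simp_rw [← mul_sum, hΛ]
        field_simp
        ring

/-- Lemma 3.1 of the paper: a `2k`-dimensional cubic average of bounded sequences is
bounded by exponential-sum suprema after eliminating two indices. -/
theorem cubic_average_estimate (k : ℕ) (hk : 2 ≤ k) (N : ℕ) (hN : 1 ≤ N)
    (a : (Fin k → Bool) → ℕ → ℕ → ℝ)
    (ha : ∀ v m n, |a v m n| ≤ 1) :
    |(1 / (N : ℝ) ^ (2 * k)) *
        ∑ l ∈ Fintype.piFinset (fun _ : Fin k => Finset.range N),
          ∑ h ∈ Fintype.piFinset (fun _ : Fin k => Finset.range N),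
            ∏ v ∈ Finset.univ.filter (fun v : Fin k → Bool => v ≠ fun _ => false),
              a v (∑ i, if v i then l i else 0) (∑ i, if v i then h i else 0)| ^ 2 ≤
      (4 / (N : ℝ) ^ (2 * k - 4)) *
        ∑ l ∈ Fintype.piFinset (fun _ : Fin (k - 2) => Finset.range N),
          ∑ h ∈ Fintype.piFinset (fun _ : Fin (k - 2) => Finset.range N),
            ⨆ t : ℝ, ⨆ s : ℝ,
              ‖(1 / (N : ℂ) ^ 2) *
                ∑ lk ∈ Finset.range N, ∑ hk ∈ Finset.range N,
                  Complex.exp (2 * Real.pi * Complex.I * ((lk : ℂ) * (t : ℂ) + (hk : ℂ) * (s : ℂ))) *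
                    ((∏ v ∈ Finset.univ.filter (fun v : Fin k → Bool =>
                        v ⟨k - 2, by omega⟩ = false ∧ v ⟨k - 1, by omega⟩ = true),
                      a v (lk + ∑ i : Fin (k - 2), if v (Fin.castLE (by omega) i) then l i else 0)
                          (hk + ∑ i : Fin (k - 2), if v (Fin.castLE (by omega) i) then h i else 0) : ℝ) : ℂ)‖ ^ 2 := by
  obtain ⟨m, rfl⟩ : ∃ m, k = m + 2 := ⟨k - 2, by omega⟩
  exact sq_cubic_average_le m N hN a ha
end
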